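/- For every positive integer k and n = 2^k − 1, the bottom-row entries of the multiplier matrix μ^{(k)} satisfy the closed form μ̄^{(k)}_{n,j} = (ρ^k − 1)(c^{(k)}_j − π^{(k)}_j) for all 1 ≤ j < n, where μ̄ denotes the non-starred rows of μ. -/
import Mathlib

noncomputable def rho : ℝ := 1 + Real.sqrt 2

noncomputable def silver (t : ℕ) : ℝ := rho ^ ((padicValNat 2 (t + 1) : ℤ) - 1) + 1

/-- The auxiliary sequence c^{(k)} (zero-based indexing of the 2^k − 1 entries):
c^{(1)} = [2(ρ−1)],
c^{(k+1)} = [π^{(k)}, (1+1/ρ^k)(ρ^{k−1}+1), ρ c^{(k)} − (ρ−1−1/ρ^k) π^{(k)}]. -/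
noncomputable def csil : ℕ → ℕ → ℝ
  | 0, _ => 0
  | 1, _ => 2 * (rho - 1)
  | (k+2), j =>
      let n := 2 ^ (k + 1) - 1
      if j < n then silver j
      else if j = n then (1 + rho ^ (-(k + 1 : ℤ))) * (rho ^ k + 1)
      else rho * csil (k+1) (j - n - 1) - (rho - 1 - rho ^ (-(k + 1 : ℤ))) * silver (j - n - 1)

/-- The non-starred multipliers μ̄^{(k)} for the co-coercivities of h (zero-based indices in
{0, ..., 2^k − 2}; zero-based row/column r corresponds to the paper's 1-based index r + 1).
μ̄^{(1)} = [0] and μ̄^{(k+1)} = μ̄^{(k+1),rec} + μ̄^{(k+1),sparse} + μ̄^{(k+1),lr}: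
the recursion glues μ̄^{(k)} (top-left) and ρ²μ̄^{(k)} (bottom-right); the sparse correction
places ρ^k at (n, n+1), ρ² at (n+1, n+2) and (ρ − 1/ρ^k)(ρ^{k−1}+1) at (2n+1, n+1)
(1-based, n = 2^k − 1); the low-rank correction adds
(1 − ρ^k/(ρ^{k−1}+1))(c^{(k)}_j − π^{(k)}_j) to row n and (ρ^k/(ρ^{k−1}+1))(c^{(k)}_j − π^{(k)}_j)
to row n+1 for columns 1 ≤ j ≤ n, and (ρ^k/(ρ^{k−1}+1))π^{(k)}_{j−n−1} to row n,
(ρ/(ρ^{k−1}+1))π^{(k)}_{j−n−1} to row n+1, (ρ+1)c^{(k)}_{j−n−1} − (1+1/ρ^k)π^{(k)}_{j−n−1}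
to row 2n+1 for columns n+2 ≤ j ≤ 2n+1. -/
noncomputable def mubar : ℕ → ℕ → ℕ → ℝ
  | 0, _, _ => 0
  | 1, _, _ => 0
  | (k+2), i, j =>
      let n := 2 ^ (k + 1) - 1
      (if i < n ∧ j < n then mubar (k+1) i j
       else if n + 1 ≤ i ∧ n + 1 ≤ j then rho ^ 2 * mubar (k+1) (i - n - 1) (j - n - 1)
       else 0)
      + (if i = n - 1 ∧ j = n then rho ^ (k+1)
         else if i = n ∧ j = n + 1 then rho ^ 2
         else if i = 2 * n ∧ j = n then (rho - rho ^ (-(k + 1 : ℤ))) * (rho ^ k + 1)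
         else 0)
      + (if i = n - 1 ∧ j < n then (1 - rho ^ (k+1) / (rho ^ k + 1)) * (csil (k+1) j - silver j)
         else if i = n ∧ j < n then (rho ^ (k+1) / (rho ^ k + 1)) * (csil (k+1) j - silver j)
         else if i = n - 1 ∧ n + 1 ≤ j then (rho ^ (k+1) / (rho ^ k + 1)) * silver (j - n - 1)
         else if i = n ∧ n + 1 ≤ j then (rho / (rho ^ k + 1)) * silver (j - n - 1)
         else if i = 2 * n ∧ n + 1 ≤ j then
           (rho + 1) * csil (k+1) (j - n - 1) - (1 + rho ^ (-(k + 1 : ℤ))) * silver (j - n - 1)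
         else 0)

lemma val2_add_pow (m s : ℕ) (hs : 0 < s) (h : s < 2 ^ m) :
    padicValNat 2 (2 ^ m + s) = padicValNat 2 s := by
  have hp : Fact (Nat.Prime 2) := ⟨Nat.prime_two⟩
  obtain ⟨v, hv⟩ : ∃ v, v = padicValNat 2 s := ⟨_, rfl⟩
  have hdvd : 2 ^ v ∣ s := hv ▸ pow_padicValNat_dvd
  have hns : ¬ 2 ^ (v + 1) ∣ s := hv ▸ pow_succ_padicValNat_not_dvd (p := 2) hs.ne'
  obtain ⟨u, hu⟩ := hdvd
  have hu0 : u ≠ 0 := by rintro rfl; simp at hu; omega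
  have hnd : ¬ 2 ∣ u := by
    rintro ⟨w, hw⟩
    exact hns ⟨w, by rw [hu, hw]; ring⟩
  have hvm : v < m := by
    have h1 : 2 ^ v ≤ s := Nat.le_of_dvd hs ⟨u, hu⟩
    exact (Nat.pow_lt_pow_iff_right one_lt_two).mp (lt_of_le_of_lt h1 h)
  have key : 2 ^ m + s = 2 ^ v * (2 ^ (m - v) + u) := by
    rw [Nat.mul_add, ← pow_add, hu]
    congr 2
    omega
  have hodd : ¬ 2 ∣ (2 ^ (m - v) + u) := by
    intro hd
    have h2 : (2:ℕ) ∣ 2 ^ (m - v) := dvd_pow_self 2 (by omega)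
    exact hnd ((Nat.dvd_add_right h2).mp hd)
  rw [key, padicValNat.mul (by positivity) (by positivity), padicValNat.prime_pow,
    padicValNat.eq_zero_of_not_dvd hodd, add_zero, hv]

lemma rho_pos : 0 < rho := by
  have := Real.sqrt_nonneg 2
  unfold rho; linarith

lemma rho_sq : rho ^ 2 = 2 * rho + 1 := by
  have h : Real.sqrt 2 ^ 2 = 2 := Real.sq_sqrt (by norm_num)
  unfold rho; nlinarith [h]

lemma silver_shift (m t : ℕ) (h : t + 1 < 2 ^ m) : silver (2 ^ m + t) = silver t := by
  unfold silver
  rw [show 2 ^ m + t + 1 = 2 ^ m + (t + 1) by ring, val2_add_pow m (t+1) (by omega) h]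

lemma silver_two_pow (m : ℕ) : silver (2 ^ m - 1) = rho ^ ((m : ℤ) - 1) + 1 := by
  have h1 : 1 ≤ 2 ^ m := Nat.one_le_two_pow
  have hp : Fact (Nat.Prime 2) := ⟨Nat.prime_two⟩
  unfold silver
  rw [show 2 ^ m - 1 + 1 = 2 ^ m by omega, padicValNat.prime_pow]

lemma zpow_neg_nat (k : ℕ) : rho ^ (-(k + 1 : ℤ)) = (rho ^ (k+1))⁻¹ := by
  rw [show -(k + 1 : ℤ) = -((k+1 : ℕ) : ℤ) by push_cast; ring, zpow_neg, zpow_natCast]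

set_option maxHeartbeats 2000000 in
lemma mubar_main (k : ℕ) (j : ℕ) (hj : j < 2 ^ (k+1) - 2) :
    mubar (k+1) (2 ^ (k+1) - 2) j = (rho ^ (k+1) - 1) * (csil (k+1) j - silver j) := by
  induction k generalizing j with
  | zero => simp at hj
  | succ k ih =>
    have hN : 2 ≤ 2 ^ (k+1) := by
      have : 2 ^ 1 ≤ 2 ^ (k+1) := Nat.pow_le_pow_right (by norm_num) (by omega)
      simpa using this
    have hi : 2 ^ (k+1+1) - 2 = 2 * (2 ^ (k+1) - 1) := by rw [pow_succ]; omega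
    have hX : rho ^ (k+1) ≠ 0 := pow_ne_zero _ rho_pos.ne'
    have hXY : rho ^ (k+1) * (rho ^ (k+1))⁻¹ = 1 := mul_inv_cancel₀ hX
    rw [hi]
    simp only [mubar, csil, true_and]
    rcases Nat.lt_trichotomy j (2 ^ (k+1) - 1) with hc | hc | hc
    · -- j < n : everything is 0
      rw [if_pos hc]
      split_ifs with h1 h2 h3 h4 h5 h6 h7 h8 h9 h10 h11 h12 <;>
        first
          | (exfalso; omega)
          | ring
    · -- j = n
      rw [if_neg (by omega), if_pos hc, zpow_neg_nat]
      
      have hsil : silver j = rho ^ k + 1 := by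
        rw [hc, silver_two_pow]
        rw [show ((k+1 : ℕ) : ℤ) - 1 = (k : ℤ) by push_cast; ring, zpow_natCast]
      rw [hsil]
      split_ifs with h1 h2 h3 h4 h5 h6 h7 h8 h9 h10 h11 h12 <;>
        first
          | (exfalso; omega)
          | (linear_combination (-(rho * (rho ^ k + 1))) * hXY)
    · -- j > n
      obtain ⟨t, rfl⟩ : ∃ t, j = 2 ^ (k+1) + t := ⟨j - 2 ^ (k+1), by omega⟩
      have ht : t < 2 ^ (k+1) - 2 := by
        have := hj
        rw [pow_succ] at this
        omega
      have hjn : 2 ^ (k+1) + t - (2 ^ (k+1) - 1) - 1 = t := by omega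
      have hss : silver (2 ^ (k+1) + t) = silver t := silver_shift _ _ (by omega)
      rw [hss]
      split_ifs with h1 h2 h3 h4 h5 h6 h7 h8 h9 h10 h11 h12 <;>
        try (exfalso; omega)
      · rw [show 2 * (2 ^ (k+1) - 1) - (2 ^ (k+1) - 1) - 1 = 2 ^ (k+1) - 2 by omega, hjn,
          ih t ht, zpow_neg_nat]
        linear_combination (silver t - csil (k+1) t) * rho_sq - rho * silver t * hXY

/-- closed form for the row of μ̄^{(k)} with (1-based) index n = 2^k − 1
(zero-based index n − 1): for all 1 ≤ j < n (zero-based j < n − 1),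
μ̄^{(k)}_{n,j} = (ρ^k − 1)(c^{(k)}_j − π^{(k)}_j). -/
theorem mubar_last_row (k : ℕ) (hk : 1 ≤ k) (j : ℕ) (hj : j < 2 ^ k - 1 - 1) :
    mubar k (2 ^ k - 1 - 1) j = (rho ^ k - 1) * (csil k j - silver j) := by
  obtain ⟨m, rfl⟩ : ∃ m, k = m + 1 := ⟨k - 1, by omega⟩
  rw [show 2 ^ (m+1) - 1 - 1 = 2 ^ (m+1) - 2 from by omega] at hj ⊢
  exact mubar_main m j hj
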